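/- Let (A,d_A) and (B,d_B) be dg-algebras over a graded-commutative dg-division ring (K,d_K) and suppose φ:(A,d_A)→(B,d_B) is a dg-separable dg-extension. Then a short exact sequence of dg-modules 0→(L,δ_L)→(M,δ_M)→(N,δ_N)→0 over (B,d_B) is split (as a sequence of dg-(B,d_B)-modules) if and only if it is split when considered, via restriction along φ, as a sequence of dg-modules over (A,d_A). -/

import Mathlib

open scoped TensorProduct

section DGCore

variable {A : Type} [Ring A] {B : Type} [Ring B]

/-- `(A, d)` together with the grading `𝒜` is a differential graded ring:
`d` is a square-zero additive endomorphism of degree `1` satisfying the graded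
Leibniz rule. -/
structure IsDGRing (𝒜 : ℤ → AddSubgroup A) (d : A →+ A) : Prop where
  d_sq : ∀ x, d (d x) = 0
  d_mem : ∀ (i : ℤ), ∀ x ∈ 𝒜 i, d x ∈ 𝒜 (i + 1)
  leibniz : ∀ (i : ℤ) (a b : A), a ∈ 𝒜 i →
    d (a * b) = d a * b + ((Int.negOnePow i : ℤ)) • (a * d b)

/-- A homomorphism of differential graded rings (a dg-extension). -/
structure IsDGHom (𝒜 : ℤ → AddSubgroup A) (dA : A →+ A)
    (𝒝 : ℤ → AddSubgroup B) (dB : B →+ B) (φ : A →+* B) : Prop where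
  map_mem : ∀ (i : ℤ), ∀ x ∈ 𝒜 i, φ x ∈ 𝒝 i
  map_d : ∀ x, φ (dA x) = dB (φ x)

/-- Graded commutativity: `a * b = (-1)^{|a||b|} b * a` for homogeneous elements. -/
def IsGradedComm (𝒜 : ℤ → AddSubgroup A) : Prop :=
  ∀ (i j : ℤ) (a b : A), a ∈ 𝒜 i → b ∈ 𝒜 j →
    a * b = ((Int.negOnePow (i * j) : ℤ)) • (b * a)

/-- A dg-ring is acyclic if its homology vanishes, i.e. every cycle is a boundary. -/
def IsAcyclic (d : A →+ A) : Prop := ∀ x, d x = 0 → ∃ y, d y = x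

/-- A dg left ideal: a graded additive subgroup closed under the differential and
under left multiplication. -/
def IsDGLeftIdeal (𝒜 : ℤ → AddSubgroup A) [GradedRing 𝒜] (d : A →+ A)
    (I : AddSubgroup A) : Prop :=
  (∀ (a : A), ∀ x ∈ I, a * x ∈ I) ∧ (∀ x ∈ I, d x ∈ I) ∧
    (∀ x ∈ I, ∀ i : ℤ, (DirectSum.decompose 𝒜 x i : A) ∈ I)

/-- A dg right ideal. -/
def IsDGRightIdeal (𝒜 : ℤ → AddSubgroup A) [GradedRing 𝒜] (d : A →+ A)
    (I : AddSubgroup A) : Prop :=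
  (∀ (a : A), ∀ x ∈ I, x * a ∈ I) ∧ (∀ x ∈ I, d x ∈ I) ∧
    (∀ x ∈ I, ∀ i : ℤ, (DirectSum.decompose 𝒜 x i : A) ∈ I)

/-- A dg-division ring: the only dg left ideals and the only dg right ideals
are `0` and the whole ring. -/
def IsDGDivisionRing (𝒜 : ℤ → AddSubgroup A) [GradedRing 𝒜] (d : A →+ A) : Prop :=
  (0 : A) ≠ 1 ∧ (∀ I, IsDGLeftIdeal 𝒜 d I → I = ⊥ ∨ I = ⊤) ∧
    (∀ I, IsDGRightIdeal 𝒜 d I → I = ⊥ ∨ I = ⊤)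

/-- A graded division ring (gr-field): every nonzero homogeneous element is invertible. -/
def IsGradedDivisionRing (𝒜 : ℤ → AddSubgroup A) : Prop :=
  (0 : A) ≠ 1 ∧ ∀ (i : ℤ) (x : A), x ∈ 𝒜 i → x ≠ 0 → IsUnit x

/-- The relations defining `B ⊗[A] B` inside `B ⊗[ℤ] B`, for an extension `φ : A →+* B`. -/
def sepRel (φ : A →+* B) : Submodule ℤ (B ⊗[ℤ] B) :=
  Submodule.span ℤ {x | ∃ (b b' : B) (a : A),
    x = (b * φ a) ⊗ₜ[ℤ] b' - b ⊗ₜ[ℤ] (φ a * b')}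

/-- The balanced tensor product `B ⊗[A] B` for an extension `φ : A →+* B`. -/
abbrev SepTensor (φ : A →+* B) := (B ⊗[ℤ] B) ⧸ sepRel φ

/-- The canonical projection `B ⊗[ℤ] B → B ⊗[A] B`. -/
noncomputable def sepMk (φ : A →+* B) : B ⊗[ℤ] B →ₗ[ℤ] SepTensor φ := (sepRel φ).mkQ

/-- The multiplication map `μ : B ⊗[A] B → B`. -/
noncomputable def sepMul (φ : A →+* B) : SepTensor φ →ₗ[ℤ] B :=
  Submodule.liftQ _ (TensorProduct.lift (LinearMap.mul ℤ B)) (by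
    rw [sepRel, Submodule.span_le]
    rintro x ⟨b, b', a, rfl⟩
    simp [SetLike.mem_coe, LinearMap.mem_ker, mul_assoc]
    change TensorProduct.lift (LinearMap.mul ℤ B) ((b * φ a) ⊗ₜ[ℤ] b' - b ⊗ₜ[ℤ] (φ a * b')) = 0
    rw [map_sub, TensorProduct.lift.tmul, TensorProduct.lift.tmul]
    simp [mul_assoc])

/-- Left multiplication by `b` on `B ⊗[A] B`. -/
noncomputable def sepLMul (φ : A →+* B) (b : B) : SepTensor φ →ₗ[ℤ] SepTensor φ :=
  Submodule.mapQ _ _ (TensorProduct.map (LinearMap.mulLeft ℤ b) LinearMap.id) (by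
    rw [sepRel, Submodule.span_le]
    rintro x ⟨b₀, b', a, rfl⟩
    simp only [SetLike.mem_coe, Submodule.mem_comap, map_sub, TensorProduct.map_tmul,
      LinearMap.mulLeft_apply, LinearMap.id_apply]
    exact Submodule.subset_span ⟨b * b₀, b', a, by erw [map_sub, TensorProduct.map_tmul, TensorProduct.map_tmul]; simp [mul_assoc]⟩)

/-- Right multiplication by `b` on `B ⊗[A] B`. -/
noncomputable def sepRMul (φ : A →+* B) (b : B) : SepTensor φ →ₗ[ℤ] SepTensor φ :=
  Submodule.mapQ _ _ (TensorProduct.map LinearMap.id (LinearMap.mulRight ℤ b)) (by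
    rw [sepRel, Submodule.span_le]
    rintro x ⟨b₀, b', a, rfl⟩
    simp only [SetLike.mem_coe, Submodule.mem_comap, map_sub, TensorProduct.map_tmul,
      LinearMap.mulRight_apply, LinearMap.id_apply]
    exact Submodule.subset_span ⟨b₀, b' * b, a, by erw [map_sub, TensorProduct.map_tmul, TensorProduct.map_tmul]; simp [mul_assoc]⟩)

/-- The grading on `B ⊗[A] B`: the degree `n` part is generated by the classes of
`b ⊗ b'` with `b, b'` homogeneous of degrees summing to `n`. -/
noncomputable def sepGrading (φ : A →+* B) (𝒝 : ℤ → AddSubgroup B) (n : ℤ) :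
    AddSubgroup (SepTensor φ) :=
  AddSubgroup.closure {x | ∃ (i j : ℤ) (b b' : B), b ∈ 𝒝 i ∧ b' ∈ 𝒝 j ∧ i + j = n ∧
    x = sepMk φ (b ⊗ₜ[ℤ] b')}

/-- The sign involution `b ↦ (-1)^{|b|} b` of a graded ring. -/
noncomputable def signMap (𝒝 : ℤ → AddSubgroup B) [GradedRing 𝒝] : B →+ B :=
  (DirectSum.toAddMonoid fun i =>
      (smulAddHom ℤ B ((Int.negOnePow i : ℤ))).comp (𝒝 i).subtype).comp
    (DirectSum.decomposeAddEquiv 𝒝).toAddMonoidHom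

lemma signMap_of_mem (𝒝 : ℤ → AddSubgroup B) [GradedRing 𝒝] {i : ℤ} {x : B}
    (hx : x ∈ 𝒝 i) : signMap 𝒝 x = ((Int.negOnePow i : ℤ)) • x := by
  classical
  unfold signMap
  simp only [AddMonoidHom.comp_apply, AddEquiv.coe_toAddMonoidHom,
    DirectSum.decomposeAddEquiv_apply, DirectSum.decompose_of_mem 𝒝 hx,
    DirectSum.toAddMonoid_of]
  rfl

/-- The differential `d ⊗ 1 + ε ⊗ d` on `B ⊗[ℤ] B` (with Koszul sign). -/
noncomputable def sepDiffPre (𝒝 : ℤ → AddSubgroup B) [GradedRing 𝒝] (dB : B →+ B) :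
    B ⊗[ℤ] B →ₗ[ℤ] B ⊗[ℤ] B :=
  TensorProduct.map dB.toIntLinearMap LinearMap.id +
    TensorProduct.map (signMap 𝒝).toIntLinearMap dB.toIntLinearMap

/-- `D` is the differential induced on `B ⊗[A] B` by `d_B ⊗ 1 + ε ⊗ d_B`. -/
def IsSepDiff (φ : A →+* B) (𝒝 : ℤ → AddSubgroup B) [GradedRing 𝒝] (dB : B →+ B)
    (D : SepTensor φ →+ SepTensor φ) : Prop :=
  ∀ x : B ⊗[ℤ] B, D (sepMk φ x) = sepMk φ (sepDiffPre 𝒝 dB x)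

/-- `ρ : B → B ⊗[A] B` is a `B`-`B`-bimodule section of the multiplication map. -/
def IsSepSection (φ : A →+* B) (ρ : B →+ SepTensor φ) : Prop :=
  (∀ b, sepMul φ (ρ b) = b) ∧
    (∀ (b₁ c b₂ : B), ρ (b₁ * c * b₂) = sepLMul φ b₁ (sepRMul φ b₂ (ρ c)))

/-- The extension `φ : A →+* B` is separable: the multiplication map
`B ⊗[A] B → B` splits as a bimodule map. -/
def IsSeparableExt (φ : A →+* B) : Prop := ∃ ρ : B →+ SepTensor φ, IsSepSection φ ρ

/-- The extension `φ : A →+* B` of graded rings is graded-separable: the multiplication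
map `B ⊗[A] B → B` splits as a map of graded bimodules. -/
def IsGrSeparable (φ : A →+* B) (𝒝 : ℤ → AddSubgroup B) : Prop :=
  ∃ ρ : B →+ SepTensor φ, IsSepSection φ ρ ∧
    ∀ (n : ℤ), ∀ b ∈ 𝒝 n, ρ b ∈ sepGrading φ 𝒝 n

/-- The dg-extension `φ : (A,d_A) →  (B,d_B)` is dg-separable: the multiplication map
`B ⊗[A] B → B` splits as a map of differential graded bimodules. -/
def IsDGSeparable (φ : A →+* B) (𝒝 : ℤ → AddSubgroup B) [GradedRing 𝒝]
    (dB : B →+ B) : Prop :=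
  ∃ D : SepTensor φ →+ SepTensor φ, IsSepDiff φ 𝒝 dB D ∧
    ∃ ρ : B →+ SepTensor φ, IsSepSection φ ρ ∧
      (∀ (n : ℤ), ∀ b ∈ 𝒝 n, ρ b ∈ sepGrading φ 𝒝 n) ∧
      (∀ b, D (ρ b) = ρ (dB b))

end DGCore

section DGModules

/-- A differential graded module over the dg-ring `(A, 𝒜, d)`. -/
structure IsDGModuleStr {A : Type} [Ring A] (𝒜 : ℤ → AddSubgroup A) (d : A →+ A)
    {M : Type} [AddCommGroup M] [Module A M] (ℳ : ℤ → AddSubgroup M) (δ : M →+ M) :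
    Prop where
  δ_sq : ∀ m, δ (δ m) = 0
  δ_mem : ∀ (i : ℤ), ∀ m ∈ ℳ i, δ m ∈ ℳ (i + 1)
  smul_mem : ∀ (i j : ℤ) (a : A) (m : M), a ∈ 𝒜 i → m ∈ ℳ j → a • m ∈ ℳ (i + j)
  leibniz : ∀ (i : ℤ) (a : A) (m : M), a ∈ 𝒜 i →
    δ (a • m) = d a • m + ((Int.negOnePow i : ℤ)) • (a • δ m)

/-- A homomorphism of dg-modules over the ring `R`: an `R`-linear map of degree `0`
commuting with the differentials. -/
def IsDGModHom (R : Type) [Ring R] {M N : Type} [AddCommGroup M] [AddCommGroup N]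
    [Module R M] [Module R N] (ℳ : ℤ → AddSubgroup M) (δM : M →+ M)
    (𝒩 : ℤ → AddSubgroup N) (δN : N →+ N) (f : M →+ N) : Prop :=
  (∀ (r : R) (m : M), f (r • m) = r • f m) ∧ (∀ (i : ℤ), ∀ m ∈ ℳ i, f m ∈ 𝒩 i) ∧
    (∀ m, f (δM m) = δN (f m))

/-- A homomorphism of dg-modules for the structures restricted along `φ : A →+* B`:
an `A`-linear (via `φ`) map of degree `0` commuting with the differentials. -/
def IsDGModHomOver {A B : Type} [Ring A] [Ring B] (φ : A →+* B) {M N : Type}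
    [AddCommGroup M] [AddCommGroup N] [Module B M] [Module B N]
    (ℳ : ℤ → AddSubgroup M) (δM : M →+ M) (𝒩 : ℤ → AddSubgroup N) (δN : N →+ N)
    (f : M →+ N) : Prop :=
  (∀ (a : A) (m : M), f (φ a • m) = φ a • f m) ∧ (∀ (i : ℤ), ∀ m ∈ ℳ i, f m ∈ 𝒩 i) ∧
    (∀ m, f (δM m) = δN (f m))

end DGModules

/-!
Restricting a `B`-linear dg-splitting along `φ` gives an `A`-linear one. Conversely, let `s` be an
`A`-linear dg-section of `g` and let `e = ρ 1 = ∑ bᵢ ⊗ b'ᵢ ∈ B ⊗[A] B`, where `ρ` is the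
dg-bimodule section of multiplication. The average `n ↦ ∑ bᵢ • s (b'ᵢ • n)` is well defined because
`s` is `A`-linear, is `B`-linear because `b • e = ρ b = e • b`, is a section because
`∑ bᵢ b'ᵢ = 1`, has degree `0` because `e` does, and commutes with the differentials because
`D e = ρ (d 1) = 0`.
-/

section Averaging

variable {A B M N : Type} [Ring A] [Ring B] {φ : A →+* B}
  [AddCommGroup M] [AddCommGroup N] [Module B M] [Module B N]

lemma SepTensor.hom_ext {P : Type} [AddCommGroup P] {F G : SepTensor φ →ₗ[ℤ] P}
    (h : ∀ b b' : B, F (sepMk φ (b ⊗ₜ b')) = G (sepMk φ (b ⊗ₜ b'))) : F = G :=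
  Submodule.linearMap_qext _ (TensorProduct.ext' h)

@[simp]
lemma sepMul_sepMk_tmul (b b' : B) : sepMul φ (sepMk φ (b ⊗ₜ b')) = b * b' :=
  rfl

@[simp]
lemma sepLMul_sepMk_tmul (b b₀ b' : B) :
    sepLMul φ b (sepMk φ (b₀ ⊗ₜ b')) = sepMk φ ((b * b₀) ⊗ₜ b') :=
  rfl

@[simp]
lemma sepRMul_sepMk_tmul (b b₀ b' : B) :
    sepRMul φ b (sepMk φ (b₀ ⊗ₜ b')) = sepMk φ (b₀ ⊗ₜ (b' * b)) :=
  rfl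

lemma sepLMul_one : sepLMul φ 1 = LinearMap.id :=
  SepTensor.hom_ext fun b b' => by rw [sepLMul_sepMk_tmul, one_mul, LinearMap.id_apply]

lemma sepRMul_one : sepRMul φ 1 = LinearMap.id :=
  SepTensor.hom_ext fun b b' => by rw [sepRMul_sepMk_tmul, mul_one, LinearMap.id_apply]

lemma IsSepSection.sepLMul_apply_one {ρ : B →+ SepTensor φ} (hρ : IsSepSection φ ρ) (b : B) :
    sepLMul φ b (ρ 1) = ρ b := by
  simpa [sepRMul_one] using (hρ.2 b 1 1).symm

lemma IsSepSection.sepRMul_apply_one {ρ : B →+ SepTensor φ} (hρ : IsSepSection φ ρ) (b : B) :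
    sepRMul φ b (ρ 1) = ρ b := by
  simpa [sepLMul_one] using (hρ.2 1 1 b).symm

variable (s : N →+ M)

noncomputable def tensorAverage (n : N) : B ⊗[ℤ] B →ₗ[ℤ] M :=
  TensorProduct.lift
    (LinearMap.mk₂ ℤ (fun b b' => b • s (b' • n))
      (fun b₁ b₂ b' => add_smul b₁ b₂ _)
      (fun c b b' => smul_assoc c b _)
      (fun b b₁ b₂ => by rw [add_smul, map_add, smul_add])
      (fun c b b' => by rw [smul_assoc, map_zsmul, smul_comm]))

@[simp]
lemma tensorAverage_tmul (n : N) (b b' : B) : tensorAverage s n (b ⊗ₜ[ℤ] b') = b • s (b' • n) :=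
  rfl

variable {s}

noncomputable def sepAverage (hs : ∀ (a : A) (n : N), s (φ a • n) = φ a • s n) (n : N) :
    SepTensor φ →ₗ[ℤ] M :=
  (sepRel φ).liftQ (tensorAverage s n) <| by
    rw [sepRel, Submodule.span_le]
    rintro _ ⟨b, b', a, rfl⟩
    simp [mul_smul, hs]

variable (hs : ∀ (a : A) (n : N), s (φ a • n) = φ a • s n)

@[simp]
lemma sepAverage_sepMk (n : N) (x : B ⊗[ℤ] B) :
    sepAverage hs n (sepMk φ x) = tensorAverage s n x :=
  rfl

lemma sepAverage_add (n₁ n₂ : N) :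
    sepAverage hs (n₁ + n₂) = sepAverage hs n₁ + sepAverage hs n₂ :=
  SepTensor.hom_ext fun b b' => by simp [smul_add]

lemma sepAverage_comp_sepLMul (n : N) (b : B) :
    sepAverage hs n ∘ₗ sepLMul φ b = b • sepAverage hs n :=
  SepTensor.hom_ext fun b₀ b' => by simp [mul_smul]

lemma sepAverage_smul (n : N) (b : B) :
    sepAverage hs (b • n) = sepAverage hs n ∘ₗ sepRMul φ b :=
  SepTensor.hom_ext fun b₀ b' => by simp [mul_smul]

lemma map_sepAverage {g : M →+ N} (hg : ∀ (b : B) (m : M), g (b • m) = b • g m)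
    (hgs : ∀ n, g (s n) = n) (n : N) (x : SepTensor φ) :
    g (sepAverage hs n x) = sepMul φ x • n := by
  have key : g.toIntLinearMap ∘ₗ sepAverage hs n = (sepMul φ).smulRight n :=
    SepTensor.hom_ext fun b b' => by simp [hg, hgs, mul_smul]
  exact LinearMap.congr_fun key x

lemma sepAverage_mem {𝒝 : ℤ → AddSubgroup B} {ℳ : ℤ → AddSubgroup M} {𝒩 : ℤ → AddSubgroup N}
    (hℳ : ∀ (i j : ℤ) (b : B) (m : M), b ∈ 𝒝 i → m ∈ ℳ j → b • m ∈ ℳ (i + j))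
    (h𝒩 : ∀ (i j : ℤ) (b : B) (n : N), b ∈ 𝒝 i → n ∈ 𝒩 j → b • n ∈ 𝒩 (i + j))
    (hs_mem : ∀ (i : ℤ), ∀ n ∈ 𝒩 i, s n ∈ ℳ i) {i k : ℤ} {n : N} (hn : n ∈ 𝒩 i)
    {x : SepTensor φ} (hx : x ∈ sepGrading φ 𝒝 k) : sepAverage hs n x ∈ ℳ (k + i) := by
  induction hx using AddSubgroup.closure_induction with
  | mem x hx =>
    obtain ⟨j, j', b, b', hb, hb', rfl, rfl⟩ := hx
    rw [sepAverage_sepMk, tensorAverage_tmul, add_assoc]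
    exact hℳ _ _ _ _ hb (hs_mem _ _ (h𝒩 _ _ _ _ hb' hn))
  | zero => simp
  | add x y _ _ hx hy => simpa using add_mem hx hy
  | neg x _ hx => simpa using hx

lemma sepAverage_leibniz {𝒝 : ℤ → AddSubgroup B} [GradedRing 𝒝] {dB : B →+ B}
    {δM : M →+ M} {δN : N →+ N}
    (hδM : ∀ (i : ℤ) (b : B) (m : M), b ∈ 𝒝 i →
      δM (b • m) = dB b • m + ((Int.negOnePow i : ℤ)) • (b • δM m))
    (hδN : ∀ (i : ℤ) (b : B) (n : N), b ∈ 𝒝 i →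
      δN (b • n) = dB b • n + ((Int.negOnePow i : ℤ)) • (b • δN n))
    (hs_δ : ∀ n, s (δN n) = δM (s n)) {D : SepTensor φ →+ SepTensor φ}
    (hD : IsSepDiff φ 𝒝 dB D) (n : N) {k : ℤ} {x : SepTensor φ} (hx : x ∈ sepGrading φ 𝒝 k) :
    δM (sepAverage hs n x) =
      sepAverage hs n (D x) + ((Int.negOnePow k : ℤ)) • sepAverage hs (δN n) x := by
  induction hx using AddSubgroup.closure_induction with
  | mem x hx =>
    obtain ⟨j, j', b, b', hb, hb', rfl, rfl⟩ := hx
    have hD_tmul : D (sepMk φ (b ⊗ₜ b')) =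
        sepMk φ (dB b ⊗ₜ b') + sepMk φ (signMap 𝒝 b ⊗ₜ dB b') := by
      rw [hD, ← map_add]
      rfl
    rw [hD_tmul, signMap_of_mem 𝒝 hb]
    simp only [map_add, sepAverage_sepMk, tensorAverage_tmul]
    rw [hδM j b _ hb, ← hs_δ, hδN j' b' n hb', map_add, map_zsmul, smul_add, smul_add,
      smul_assoc, smul_comm b, smul_smul, ← Units.val_mul, ← Int.negOnePow_add]
    abel
  | zero => simp
  | add x y _ _ hx hy => simp only [map_add, hx, hy, smul_add]; abel
  | neg x _ hx => simp only [map_neg, hx, smul_neg, neg_add]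

noncomputable def averagedSection (e : SepTensor φ) : N →+ M :=
  AddMonoidHom.mk' (fun n => sepAverage hs n e) fun n₁ n₂ => by rw [sepAverage_add]; rfl

@[simp]
lemma averagedSection_apply (e : SepTensor φ) (n : N) :
    averagedSection hs e n = sepAverage hs n e :=
  rfl

end Averaging

lemma IsDGRing.d_one {A : Type} [Ring A] {𝒜 : ℤ → AddSubgroup A} [SetLike.GradedOne 𝒜]
    {d : A →+ A} (hd : IsDGRing 𝒜 d) : d 1 = 0 := by
  have h := hd.leibniz 0 1 1 (SetLike.one_mem_graded _)
  simp only [mul_one, Int.negOnePow_zero, Units.val_one, one_smul, one_mul] at h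
  simpa using h

lemma IsDGModHom.isDGModHomOver {A B M N : Type} [Ring A] [Ring B] [AddCommGroup M]
    [AddCommGroup N] [Module B M] [Module B N] {ℳ : ℤ → AddSubgroup M} {δM : M →+ M}
    {𝒩 : ℤ → AddSubgroup N} {δN : N →+ N} {f : M →+ N} (hf : IsDGModHom B ℳ δM 𝒩 δN f)
    (φ : A →+* B) : IsDGModHomOver φ ℳ δM 𝒩 δN f :=
  ⟨fun a => hf.1 (φ a), hf.2⟩

theorem IsDGSeparable.exists_isDGModHom_section {A B M N : Type} [Ring A] [Ring B]
    [AddCommGroup M] [AddCommGroup N] [Module B M] [Module B N] {φ : A →+* B}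
    {𝒝 : ℤ → AddSubgroup B} [GradedRing 𝒝] {dB : B →+ B} {ℳ : ℤ → AddSubgroup M}
    {δM : M →+ M} {𝒩 : ℤ → AddSubgroup N} {δN : N →+ N} (hsep : IsDGSeparable φ 𝒝 dB)
    (hB : IsDGRing 𝒝 dB) (hM : IsDGModuleStr 𝒝 dB ℳ δM) (hN : IsDGModuleStr 𝒝 dB 𝒩 δN)
    {g : M →+ N} (hg : ∀ (b : B) (m : M), g (b • m) = b • g m) {s : N →+ M}
    (hs : IsDGModHomOver φ 𝒩 δN ℳ δM s) (hgs : ∀ n, g (s n) = n) :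
    ∃ s' : N →+ M, IsDGModHom B 𝒩 δN ℳ δM s' ∧ ∀ n, g (s' n) = n := by
  obtain ⟨hs_lin, hs_mem, hs_δ⟩ := hs
  obtain ⟨D, hD, ρ, hρ, hρ_mem, hρ_D⟩ := hsep
  have he_mem : ρ 1 ∈ sepGrading φ 𝒝 0 := hρ_mem 0 1 (SetLike.one_mem_graded _)
  have he_D : D (ρ 1) = 0 := by rw [hρ_D, hB.d_one, map_zero]
  refine ⟨averagedSection hs_lin (ρ 1), ⟨fun b n => ?_, fun i n hn => ?_, fun n => ?_⟩,
    fun n => ?_⟩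
  · calc sepAverage hs_lin (b • n) (ρ 1)
        = sepAverage hs_lin n (sepRMul φ b (ρ 1)) := by rw [sepAverage_smul]; rfl
      _ = sepAverage hs_lin n (sepLMul φ b (ρ 1)) := by
        rw [hρ.sepRMul_apply_one, hρ.sepLMul_apply_one]
      _ = b • sepAverage hs_lin n (ρ 1) :=
        LinearMap.congr_fun (sepAverage_comp_sepLMul hs_lin n b) _
  · simpa using sepAverage_mem hs_lin hM.smul_mem hN.smul_mem hs_mem hn he_mem
  · simpa [he_D] using (sepAverage_leibniz hs_lin hM.leibniz hN.leibniz hs_δ hD n he_mem).symm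
  · rw [averagedSection_apply, map_sepAverage hs_lin hg hgs, hρ.1, one_smul]

theorem ses_splits_iff_splits_restricted_general
    {A B : Type} [Ring A] [Ring B]
    (𝒝 : ℤ → AddSubgroup B) [GradedRing 𝒝] (dB : B →+ B)
    (hB : IsDGRing 𝒝 dB)
    (φ : A →+* B)
    (hsep : IsDGSeparable φ 𝒝 dB)
    {M N : Type} [AddCommGroup M] [AddCommGroup N]
    [Module B M] [Module B N]
    (ℳ : ℤ → AddSubgroup M) (δM : M →+ M)
    (𝒩 : ℤ → AddSubgroup N) (δN : N →+ N)
    (hM : IsDGModuleStr 𝒝 dB ℳ δM)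
    (hN : IsDGModuleStr 𝒝 dB 𝒩 δN)
    (g : M →+ N)
    (hg : IsDGModHom B ℳ δM 𝒩 δN g) :
    (∃ s : N →+ M, IsDGModHom B 𝒩 δN ℳ δM s ∧ ∀ n, g (s n) = n) ↔
      (∃ s : N →+ M, IsDGModHomOver φ 𝒩 δN ℳ δM s ∧ ∀ n, g (s n) = n) :=
  ⟨fun ⟨s, hs, hgs⟩ => ⟨s, hs.isDGModHomOver φ, hgs⟩,
    fun ⟨_, hs, hgs⟩ => hsep.exists_isDGModHom_section hB hM hN hg.1 hs hgs⟩

/-- For a dg-separable dg-extension `φ : (A,d_A) → (B,d_B)` of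
dg-algebras over a graded-commutative dg-division ring `(K,d_K)`, a short exact
sequence of dg-modules over `(B,d_B)` splits if and only if it splits after
restriction along `φ` to `(A,d_A)`. -/
theorem ses_splits_iff_splits_restricted
    {K A B : Type} [Ring K] [Ring A] [Ring B]
    (𝒦 : ℤ → AddSubgroup K) [GradedRing 𝒦] (dK : K →+ K)
    (𝒜 : ℤ → AddSubgroup A) [GradedRing 𝒜] (dA : A →+ A)
    (𝒝 : ℤ → AddSubgroup B) [GradedRing 𝒝] (dB : B →+ B)
    (hK : IsDGRing 𝒦 dK) (hKcomm : IsGradedComm 𝒦) (hKdiv : IsDGDivisionRing 𝒦 dK)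
    (hA : IsDGRing 𝒜 dA) (hB : IsDGRing 𝒝 dB)
    (κA : K →+* A) (hκA : IsDGHom 𝒦 dK 𝒜 dA κA)
    (κB : K →+* B) (hκB : IsDGHom 𝒦 dK 𝒝 dB κB)
    (φ : A →+* B) (hφ : IsDGHom 𝒜 dA 𝒝 dB φ) (hcompat : φ.comp κA = κB)
    (hsep : IsDGSeparable φ 𝒝 dB)
    {L M N : Type} [AddCommGroup L] [AddCommGroup M] [AddCommGroup N]
    [Module B L] [Module B M] [Module B N]
    (ℒ : ℤ → AddSubgroup L) (δL : L →+ L) [DirectSum.Decomposition ℒ]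
    (ℳ : ℤ → AddSubgroup M) (δM : M →+ M) [DirectSum.Decomposition ℳ]
    (𝒩 : ℤ → AddSubgroup N) (δN : N →+ N) [DirectSum.Decomposition 𝒩]
    (hL : IsDGModuleStr 𝒝 dB ℒ δL) (hM : IsDGModuleStr 𝒝 dB ℳ δM)
    (hN : IsDGModuleStr 𝒝 dB 𝒩 δN)
    (f : L →+ M) (g : M →+ N)
    (hf : IsDGModHom B ℒ δL ℳ δM f) (hg : IsDGModHom B ℳ δM 𝒩 δN g)
    (hinj : Function.Injective f) (hsurj : Function.Surjective g)
    (hexact : ∀ m : M, g m = 0 ↔ ∃ x, f x = m) :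
    (∃ s : N →+ M, IsDGModHom B 𝒩 δN ℳ δM s ∧ ∀ n, g (s n) = n) ↔
      (∃ s : N →+ M, IsDGModHomOver φ 𝒩 δN ℳ δM s ∧ ∀ n, g (s n) = n) :=
  ses_splits_iff_splits_restricted_general 𝒝 dB hB φ hsep ℳ δM 𝒩 δN hM hN g hg
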